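/- Let T > 0, n ≥ 1 an integer, δ = T/n, and t_i = i·δ for i = 0, …, n. Let d ≥ 1, C ≥ 0, and let L : ℝ × ℝ^d → ℝ satisfy |L(s, x) − L(t, x)| ≤ C·|s − t|^{1/2} for all s, t, x, and |L(t, x) − L(t, y)| ≤ C·‖x − y‖ for all t, x, y. Let X : ℝ → ℝ^d be continuous on [0, T] and suppose that for every i ∈ {0, …, n−1} and every s ∈ [t_i, t_{i+1}], ‖X(s) − X(t_i)‖ ≤ C·(s − t_i)^{1/2}. Then |∑_{i=0}^{n−1} L(t_i, X(t_i))·δ − ∫_0^T L(s, X(s)) ds| ≤ (2/3)·C·(1 + C)·T·δ^{1/2}. -/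

import Mathlib

/-!
On each grid cell `[tᵢ, tᵢ₊₁]` the integrand `g s = L(s, X s)` differs from its left-endpoint
value by at most `C (1 + C) √(s - tᵢ)`: the Hölder bound in time gives `C √(s - tᵢ)`, the
Lipschitz bound in space combined with the increment bound on `X` gives `C · C √(s - tᵢ)`.
Integrating `√(s - tᵢ)` over a cell of length `δ` gives `(2/3) δ √δ`, and summing over the
`n = T / δ` cells gives the bound.
-/

open MeasureTheory Set

theorem continuous_of_abs_sub_le_mul_sqrt {f : ℝ → ℝ} {C : ℝ}
    (h : ∀ s t, |f s - f t| ≤ C * √|s - t|) : Continuous f := by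
  refine continuous_iff_continuousAt.2 fun t => ?_
  have hbound : Filter.Tendsto (fun s => C * √|s - t|) (nhds t) (nhds 0) := by
    have : Continuous fun s => C * √|s - t| := by fun_prop
    simpa using this.tendsto t
  exact tendsto_iff_norm_sub_tendsto_zero.2 <|
    squeeze_zero (fun _ => norm_nonneg _) (fun s => h s t) hbound

theorem continuous_uncurry_of_sqrt_holder_of_lipschitz {E : Type*} [SeminormedAddCommGroup E]
    {L : ℝ → E → ℝ} {C K : ℝ} (hHolder : ∀ s t x, |L s x - L t x| ≤ C * √|s - t|)
    (hLip : ∀ t x y, |L t x - L t y| ≤ K * ‖x - y‖) : Continuous (Function.uncurry L) := by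
  refine continuous_prod_of_continuous_lipschitzWith' _ K.toNNReal (fun t => ?_)
    (fun x => continuous_of_abs_sub_le_mul_sqrt (hHolder · · x))
  refine LipschitzWith.of_dist_le_mul fun x y => ?_
  rw [Real.dist_eq, dist_eq_norm]
  exact (hLip t x y).trans (mul_le_mul_of_nonneg_right (Real.le_coe_toNNReal K) (norm_nonneg _))

theorem integral_sqrt_sub {a b : ℝ} (hab : a ≤ b) :
    ∫ s in a..b, √(s - a) = 2 / 3 * (b - a) * √(b - a) := by
  have hba : 0 ≤ b - a := sub_nonneg.2 hab
  rw [intervalIntegral.integral_comp_sub_right (fun u => √u), sub_self]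
  simp only [Real.sqrt_eq_rpow]
  rw [integral_rpow (Or.inl (by norm_num)), Real.zero_rpow (by norm_num),
    show (1 / 2 : ℝ) + 1 = 1 + 1 / 2 by norm_num, Real.rpow_add' hba (by norm_num),
    Real.rpow_one]
  ring

theorem abs_mul_sub_integral_le_of_abs_sub_le_sqrt {g : ℝ → ℝ} {a b c K : ℝ} (hab : a ≤ b)
    (hg : IntervalIntegrable g volume a b) (h : ∀ s ∈ Icc a b, |c - g s| ≤ K * √(s - a)) :
    |c * (b - a) - ∫ s in a..b, g s| ≤ 2 / 3 * K * (b - a) * √(b - a) := by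
  have hc : IntervalIntegrable (fun _ => c) volume a b := intervalIntegrable_const
  have hbound : IntervalIntegrable (fun s => K * √(s - a)) volume a b :=
    (by fun_prop : Continuous fun s => K * √(s - a)).intervalIntegrable a b
  calc |c * (b - a) - ∫ s in a..b, g s|
      = |∫ s in a..b, (c - g s)| := by
        rw [intervalIntegral.integral_sub hc hg, intervalIntegral.integral_const, smul_eq_mul,
          mul_comm]
    _ ≤ ∫ s in a..b, |c - g s| := intervalIntegral.abs_integral_le_integral_abs hab
    _ ≤ ∫ s in a..b, K * √(s - a) :=
        intervalIntegral.integral_mono_on hab (hc.sub hg).abs hbound h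
    _ = 2 / 3 * K * (b - a) * √(b - a) := by
        rw [intervalIntegral.integral_const_mul, integral_sqrt_sub hab]; ring

theorem abs_sum_mul_sub_integral_le_of_abs_sub_le_sqrt {g : ℝ → ℝ} {T K : ℝ} {n : ℕ}
    (hT : 0 ≤ T) (hn : n ≠ 0) (hg : IntervalIntegrable g volume 0 T)
    (h : ∀ i < n, ∀ s ∈ Icc ((i : ℝ) * (T / n)) (((i : ℝ) + 1) * (T / n)),
      |g (i * (T / n)) - g s| ≤ K * √(s - i * (T / n))) :
    |∑ i ∈ Finset.range n, g (i * (T / n)) * (T / n) - ∫ s in 0..T, g s| ≤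
      2 / 3 * K * T * √(T / n) := by
  set δ := T / n with hδ
  have hδ0 : 0 ≤ δ := by positivity
  have hnδ : (n : ℝ) * δ = T := by rw [hδ]; field_simp
  have hcell : ∀ i < n, uIcc ((i : ℝ) * δ) ((i + 1) * δ) ⊆ uIcc 0 T := fun i hi => by
    have hi : (i : ℝ) + 1 ≤ n := by exact_mod_cast hi
    apply uIcc_subset_uIcc <;> rw [mem_uIcc] <;> left <;> constructor <;> nlinarith
  have hsplit := intervalIntegral.sum_integral_adjacent_intervals (a := fun i => (i : ℝ) * δ)
    (n := n) fun i hi => by simpa using hg.mono_set (hcell i hi)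
  simp only [Nat.cast_add, Nat.cast_one, Nat.cast_zero, zero_mul, hnδ] at hsplit
  rw [← hsplit, ← Finset.sum_sub_distrib]
  calc |∑ i ∈ Finset.range n, (g (i * δ) * δ - ∫ s in i * δ..(i + 1) * δ, g s)|
      ≤ ∑ i ∈ Finset.range n, |g (i * δ) * δ - ∫ s in i * δ..(i + 1) * δ, g s| :=
        Finset.abs_sum_le_sum_abs _ _
    _ ≤ ∑ _i ∈ Finset.range n, 2 / 3 * K * δ * √δ := Finset.sum_le_sum fun i hi => by
        have hi := Finset.mem_range.1 hi
        have hlen : ((i : ℝ) + 1) * δ - i * δ = δ := by ring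
        simpa only [hlen] using abs_mul_sub_integral_le_of_abs_sub_le_sqrt
          (by nlinarith) (hg.mono_set (hcell i hi)) (h i hi)
    _ = 2 / 3 * K * T * √δ := by rw [Finset.sum_const, Finset.card_range, nsmul_eq_mul, ← hnδ]; ring

theorem riemann_sum_error_bound_general (T : ℝ) (hT : 0 < T) (n : ℕ) (hn : 1 ≤ n)
    (d : ℕ) (C : ℝ) (hC : 0 ≤ C)
    (L : ℝ → EuclideanSpace ℝ (Fin d) → ℝ)
    (hHolder : ∀ s t x, |L s x - L t x| ≤ C * Real.sqrt |s - t|)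
    (hLip : ∀ t x y, |L t x - L t y| ≤ C * ‖x - y‖)
    (X : ℝ → EuclideanSpace ℝ (Fin d)) (hX : ContinuousOn X (Set.Icc 0 T))
    (hincr : ∀ i < n, ∀ s ∈ Set.Icc ((i : ℝ) * (T / n)) (((i : ℝ) + 1) * (T / n)),
      ‖X s - X ((i : ℝ) * (T / n))‖ ≤ C * Real.sqrt (s - (i : ℝ) * (T / n))) :
    |(∑ i ∈ Finset.range n,
        L ((i : ℝ) * (T / n)) (X ((i : ℝ) * (T / n))) * (T / n)) -
        ∫ s in (0 : ℝ)..T, L s (X s)| ≤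
      2 / 3 * C * (1 + C) * T * Real.sqrt (T / n) := by
  have hg : ContinuousOn (fun s => L s (X s)) (Icc 0 T) :=
    (continuous_uncurry_of_sqrt_holder_of_lipschitz hHolder hLip).comp_continuousOn
      (continuousOn_id.prodMk hX)
  have hcell : ∀ i < n, ∀ s ∈ Icc ((i : ℝ) * (T / n)) (((i : ℝ) + 1) * (T / n)),
      |L (i * (T / n)) (X (i * (T / n))) - L s (X s)| ≤ C * (1 + C) * √(s - i * (T / n)) := by
    intro i hi s hs
    set t := (i : ℝ) * (T / n)
    have htime : |L t (X t) - L s (X t)| ≤ C * √(s - t) := by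
      simpa [abs_sub_comm t s, abs_of_nonneg (sub_nonneg.2 hs.1)] using hHolder t s (X t)
    have hspace : |L s (X t) - L s (X s)| ≤ C * (C * √(s - t)) :=
      (hLip s _ _).trans (mul_le_mul_of_nonneg_left ((norm_sub_rev _ _).trans_le
        (hincr i hi s hs)) hC)
    calc |L t (X t) - L s (X s)| ≤ |L t (X t) - L s (X t)| + |L s (X t) - L s (X s)| :=
          abs_sub_le _ _ _
      _ ≤ C * (1 + C) * √(s - t) := by linarith
  have hint : IntervalIntegrable (fun s => L s (X s)) volume 0 T :=
    hg.intervalIntegrable_of_Icc hT.le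
  calc _ ≤ 2 / 3 * (C * (1 + C)) * T * √(T / n) :=
        abs_sum_mul_sub_integral_le_of_abs_sub_le_sqrt hT.le (by omega) hint hcell
    _ = 2 / 3 * C * (1 + C) * T * √(T / n) := by ring

/-- Pathwise Riemann-sum error bound of order `√δ`: if `L` is 1/2-Hölder in
time and Lipschitz in state, and the path increments on each grid interval
satisfy `‖X s - X t_i‖ ≤ C √(s - t_i)`, then the left-endpoint Riemann sum on
the uniform grid with mesh `δ = T/n` approximates `∫₀ᵀ L(s, X s) ds` with
error at most `(2/3) C (1 + C) T √δ`. -/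
theorem riemann_sum_error_bound (T : ℝ) (hT : 0 < T) (n : ℕ) (hn : 1 ≤ n)
    (d : ℕ) (hd : 1 ≤ d) (C : ℝ) (hC : 0 ≤ C)
    (L : ℝ → EuclideanSpace ℝ (Fin d) → ℝ)
    (hHolder : ∀ s t x, |L s x - L t x| ≤ C * Real.sqrt |s - t|)
    (hLip : ∀ t x y, |L t x - L t y| ≤ C * ‖x - y‖)
    (X : ℝ → EuclideanSpace ℝ (Fin d)) (hX : ContinuousOn X (Set.Icc 0 T))
    (hincr : ∀ i < n, ∀ s ∈ Set.Icc ((i : ℝ) * (T / n)) (((i : ℝ) + 1) * (T / n)),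
      ‖X s - X ((i : ℝ) * (T / n))‖ ≤ C * Real.sqrt (s - (i : ℝ) * (T / n))) :
    |(∑ i ∈ Finset.range n,
        L ((i : ℝ) * (T / n)) (X ((i : ℝ) * (T / n))) * (T / n)) -
        ∫ s in (0 : ℝ)..T, L s (X s)| ≤
      2 / 3 * C * (1 + C) * T * Real.sqrt (T / n) :=
  riemann_sum_error_bound_general T hT n hn d C hC L hHolder hLip X hX hincr
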